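/- Two degree-inverting involutions ρ and ρ∘ψ on F^σ T are equivalent (i.e. conjugate by a graded automorphism: ρ∘ψ = φ⁻¹∘ρ∘φ for some graded automorphism φ) if and only if ψ is a square in the group of graded automorphisms. -/
import Mathlib


/-- A 2-cocycle on `T` with values in `Fˣ` (trivial action). -/
def IsCocycle {T : Type*} [Group T] {F : Type*} [Field F] (σ : T → T → Fˣ) : Prop :=
  ∀ u v w : T, σ u v * σ (u * v) w = σ u (v * w) * σ v w

/-- The twisted product on `F^σ T = T →₀ F`, determined on the basis by
`X_u * X_v = σ(u,v) X_{uv}`. -/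
noncomputable def twistedMul {T : Type*} [Group T] {F : Type*} [Field F]
    (σ : T → T → Fˣ) (f g : T →₀ F) : T →₀ F :=
  f.sum fun u a => g.sum fun v b => Finsupp.single (u * v) (a * b * (σ u v : F))

/-- A degree-inverting involution of `F^σ T`: an `F`-linear bijection which is an
anti-automorphism, squares to the identity, and maps the homogeneous component of
degree `u` (the span of `X_u`) into the component of degree `u⁻¹`. -/
def IsDegInvInvolution {T : Type*} [Group T] {F : Type*} [Field F]
    (σ : T → T → Fˣ) (ρ : (T →₀ F) ≃ₗ[F] (T →₀ F)) : Prop :=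
  (∀ f g : T →₀ F, ρ (twistedMul σ f g) = twistedMul σ (ρ g) (ρ f)) ∧
  (∀ f : T →₀ F, ρ (ρ f) = f) ∧
  (∀ (u : T) (a : F), ∃ c : F, ρ (Finsupp.single u a) = Finsupp.single u⁻¹ c)


/-- A `T`-graded (degree-preserving) automorphism of `F^σ T`: an `F`-linear bijection
which is multiplicative and preserves each homogeneous component `span{X_u}`. -/
def IsGradedAut {T : Type*} [Group T] {F : Type*} [Field F]
    (σ : T → T → Fˣ) (ψ : (T →₀ F) ≃ₗ[F] (T →₀ F)) : Prop :=
  (∀ f g : T →₀ F, ψ (twistedMul σ f g) = twistedMul σ (ψ f) (ψ g)) ∧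
  (∀ (u : T) (a : F), ∃ c : F, ψ (Finsupp.single u a) = Finsupp.single u c)


section Helpers
variable {T : Type*} [Group T] {F : Type*} [Field F] {σ : T → T → Fˣ}

lemma twistedMul_single (σ : T → T → Fˣ) (u v : T) (a b : F) :
    twistedMul σ (Finsupp.single u a) (Finsupp.single v b)
      = Finsupp.single (u * v) (a * b * (σ u v : F)) := by
  simp [twistedMul, Finsupp.sum_single_index]

/-- character of a graded automorphism -/
noncomputable def gchar (ψ : (T →₀ F) ≃ₗ[F] (T →₀ F)) (u : T) : F :=
  ψ (Finsupp.single u 1) u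

lemma gradedAut_apply {ψ : (T →₀ F) ≃ₗ[F] (T →₀ F)} (hψ : IsGradedAut σ ψ)
    (u : T) (a : F) : ψ (Finsupp.single u a) = Finsupp.single u (a * gchar ψ u) := by
  obtain ⟨c, hc⟩ := hψ.2 u 1
  have hcc : gchar ψ u = c := by simp [gchar, hc]
  have h : Finsupp.single u a = a • Finsupp.single u (1 : F) := by
    simp [Finsupp.smul_single]
  rw [h, map_smul, hc, Finsupp.smul_single, smul_eq_mul, hcc]

lemma gchar_ne_zero {ψ : (T →₀ F) ≃ₗ[F] (T →₀ F)} (hψ : IsGradedAut σ ψ)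
    (u : T) : gchar ψ u ≠ 0 := by
  intro h0
  have h1 : ψ (Finsupp.single u (1 : F)) = 0 := by
    rw [gradedAut_apply hψ, h0, mul_zero, Finsupp.single_zero]
  have := ψ.injective (h1.trans (map_zero ψ).symm)
  exact one_ne_zero (Finsupp.single_eq_zero.mp this)

lemma gchar_mul {ψ : (T →₀ F) ≃ₗ[F] (T →₀ F)} (hψ : IsGradedAut σ ψ)
    (u v : T) : gchar ψ (u * v) = gchar ψ u * gchar ψ v := by
  have h := hψ.1 (Finsupp.single u (1 : F)) (Finsupp.single v (1 : F))
  rw [twistedMul_single, gradedAut_apply hψ, gradedAut_apply hψ, gradedAut_apply hψ,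
    twistedMul_single] at h
  have h2 := Finsupp.single_injective (u * v) h
  have hσ : (σ u v : F) ≠ 0 := Units.ne_zero _
  have h3 : gchar ψ (u * v) * (σ u v : F) = (gchar ψ u * gchar ψ v) * (σ u v : F) := by
    linear_combination h2
  exact mul_right_cancel₀ hσ h3

lemma gchar_one {ψ : (T →₀ F) ≃ₗ[F] (T →₀ F)} (hψ : IsGradedAut σ ψ) :
    gchar ψ 1 = 1 := by
  have h := gchar_mul hψ 1 1
  rw [one_mul] at h
  have hne := gchar_ne_zero hψ (1 : T)
  have h2 : gchar ψ (1 : T) * gchar ψ (1 : T) = gchar ψ (1 : T) * 1 := by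
    linear_combination -h
  exact mul_left_cancel₀ hne h2

lemma gchar_inv {ψ : (T →₀ F) ≃ₗ[F] (T →₀ F)} (hψ : IsGradedAut σ ψ)
    (u : T) : gchar ψ u⁻¹ = (gchar ψ u)⁻¹ := by
  have h : gchar ψ u * gchar ψ u⁻¹ = 1 := by
    rw [← gchar_mul hψ, mul_inv_cancel, gchar_one hψ]
  exact eq_inv_of_mul_eq_one_left (by linear_combination h)

lemma gradedAut_symm_apply {ψ : (T →₀ F) ≃ₗ[F] (T →₀ F)} (hψ : IsGradedAut σ ψ)
    (u : T) (a : F) :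
    ψ.symm (Finsupp.single u a) = Finsupp.single u (a * (gchar ψ u)⁻¹) := by
  have h : ψ (Finsupp.single u (a * (gchar ψ u)⁻¹)) = Finsupp.single u a := by
    rw [gradedAut_apply hψ]
    congr 1
    rw [mul_assoc, inv_mul_cancel₀ (gchar_ne_zero hψ u), mul_one]
  rw [← h, ψ.symm_apply_apply]

/-- coefficient of a degree-inverting involution -/
noncomputable def dchar (ρ : (T →₀ F) ≃ₗ[F] (T →₀ F)) (u : T) : F :=
  ρ (Finsupp.single u 1) u⁻¹

lemma degInv_apply {ρ : (T →₀ F) ≃ₗ[F] (T →₀ F)} (hρ : IsDegInvInvolution σ ρ)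
    (u : T) (a : F) : ρ (Finsupp.single u a) = Finsupp.single u⁻¹ (a * dchar ρ u) := by
  obtain ⟨c, hc⟩ := hρ.2.2 u 1
  have hcc : dchar ρ u = c := by simp [dchar, hc]
  have h : Finsupp.single u a = a • Finsupp.single u (1 : F) := by
    simp [Finsupp.smul_single]
  rw [h, map_smul, hc, Finsupp.smul_single, smul_eq_mul, hcc]

lemma dchar_ne_zero {ρ : (T →₀ F) ≃ₗ[F] (T →₀ F)} (hρ : IsDegInvInvolution σ ρ)
    (u : T) : dchar ρ u ≠ 0 := by
  intro h0
  have h1 : ρ (Finsupp.single u (1 : F)) = 0 := by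
    rw [degInv_apply hρ, h0, mul_zero, Finsupp.single_zero]
  have := ρ.injective (h1.trans (map_zero ρ).symm)
  exact one_ne_zero (Finsupp.single_eq_zero.mp this)

lemma lequiv_ext {f g : (T →₀ F) ≃ₗ[F] (T →₀ F)}
    (h : ∀ (u : T) (a : F), f (Finsupp.single u a) = g (Finsupp.single u a)) : f = g :=
  LinearEquiv.toLinearMap_injective (Finsupp.lhom_ext h)

end Helpers

/-- The degree-inverting involutions `ρ` and `ρ ∘ ψ` are equivalent (conjugate by a graded
automorphism, `ρ∘ψ = φ⁻¹∘ρ∘φ`) if and only if `ψ` is a square in the group of graded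
automorphisms. -/
theorem degInvInvolution_equivalent_iff_square
    {T : Type*} [Group T] [Finite T] {F : Type*} [Field F]
    (σ : T → T → Fˣ) (hσ : IsCocycle σ)
    (ρ ψ : (T →₀ F) ≃ₗ[F] (T →₀ F))
    (hρ : IsDegInvInvolution σ ρ) (hψ : IsGradedAut σ ψ)
    (hρψ : IsDegInvInvolution σ (ψ.trans ρ)) :
    (∃ φ : (T →₀ F) ≃ₗ[F] (T →₀ F), IsGradedAut σ φ ∧
        ψ.trans ρ = φ.trans (ρ.trans φ.symm)) ↔
    (∃ φ : (T →₀ F) ≃ₗ[F] (T →₀ F), IsGradedAut σ φ ∧ ψ = φ.trans φ) := by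
  constructor
  · rintro ⟨φ, hφ, heq⟩
    refine ⟨φ, hφ, lequiv_ext fun u a => ?_⟩
    -- key: gchar ψ u = (gchar φ u)^2
    have h1 : (ψ.trans ρ) (Finsupp.single u (1 : F))
        = (φ.trans (ρ.trans φ.symm)) (Finsupp.single u (1 : F)) := by rw [heq]
    rw [LinearEquiv.trans_apply, LinearEquiv.trans_apply, LinearEquiv.trans_apply,
      gradedAut_apply hψ, degInv_apply hρ, gradedAut_apply hφ, degInv_apply hρ,
      gradedAut_symm_apply hφ, gchar_inv hφ, inv_inv] at h1
    have h2 := Finsupp.single_injective u⁻¹ h1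
    have hd := dchar_ne_zero hρ (σ := σ) u
    have hε := gchar_ne_zero hφ u
    have key : gchar ψ u = gchar φ u * gchar φ u := by
      have h3 : gchar ψ u * dchar ρ u = (gchar φ u * gchar φ u) * dchar ρ u := by
        linear_combination h2
      exact mul_right_cancel₀ hd h3
    rw [LinearEquiv.trans_apply, gradedAut_apply hψ, gradedAut_apply hφ,
      gradedAut_apply hφ, key, mul_assoc]
  · rintro ⟨φ, hφ, heq⟩
    refine ⟨φ, hφ, lequiv_ext fun u a => ?_⟩
    have key : gchar ψ u = gchar φ u * gchar φ u := by
      have h1 : ψ (Finsupp.single u (1 : F))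
          = (φ.trans φ) (Finsupp.single u (1 : F)) := by rw [heq]
      rw [LinearEquiv.trans_apply, gradedAut_apply hψ, gradedAut_apply hφ,
        gradedAut_apply hφ] at h1
      have h2 := Finsupp.single_injective u h1
      linear_combination h2
    rw [LinearEquiv.trans_apply, LinearEquiv.trans_apply, LinearEquiv.trans_apply,
      gradedAut_apply hψ, degInv_apply hρ, gradedAut_apply hφ, degInv_apply hρ,
      gradedAut_symm_apply hφ, gchar_inv hφ, inv_inv, key]
    congr 1
    ring
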